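/- For every j ∈ {0,...,n}, the j-th face map composed with symmetrisation satisfies ∂_j ∘ sym_n = (-1)^j · (∂_0 ∘ sym_n) as maps C_n(X;ℝ) → C_{n-1}(X;ℝ). -/

import Mathlib

open Finset

noncomputable section SingularChains

/-- The affine map `Δ^k → Δ^n` extending the vertex map `π`. -/
def affMap {k n : ℕ} (π : Fin (k + 1) → Fin (n + 1)) :
    C(stdSimplex ℝ (Fin (k + 1)), stdSimplex ℝ (Fin (n + 1))) where
  toFun x := ⟨fun i => ∑ l ∈ Finset.univ.filter (fun l => π l = i), (x : Fin (k + 1) → ℝ) l, by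
    constructor
    · intro i
      exact Finset.sum_nonneg fun l _ => x.2.1 l
    · rw [← x.2.2]
      exact Finset.sum_fiberwise _ _ _⟩
  continuous_toFun := by
    apply Continuous.subtype_mk
    exact continuous_pi fun i =>
      continuous_finset_sum _ fun l _ => (continuous_apply l).comp continuous_subtype_val

variable {X : Type} [TopologicalSpace X]

/-- Singular `n`-simplices in `X`. -/
abbrev Sing (n : ℕ) (X : Type) [TopologicalSpace X] := C(stdSimplex ℝ (Fin (n + 1)), X)

/-- Singular `n`-chains with real coefficients. -/
abbrev Chain (n : ℕ) (X : Type) [TopologicalSpace X] := Sing n X →₀ ℝ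

/-- The `j`-th face map `∂ⱼ : C_{n+1}(X;ℝ) → C_n(X;ℝ)`. -/
def face {n : ℕ} (j : Fin (n + 2)) : Chain (n + 1) X →ₗ[ℝ] Chain n X :=
  Finsupp.lmapDomain ℝ ℝ fun σ => σ.comp (affMap (Fin.succAbove j))

/-- The singular boundary operator `∂ = Σⱼ (-1)ʲ ∂ⱼ`. -/
def bdry (n : ℕ) : Chain (n + 1) X →ₗ[ℝ] Chain n X :=
  ∑ j : Fin (n + 2), ((-1 : ℝ) ^ (j : ℕ)) • face j

/-- The symmetrisation of a singular simplex. -/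
def symSimplex {n : ℕ} (σ : Sing n X) : Chain n X :=
  (((n + 1).factorial : ℝ))⁻¹ •
    ∑ π : Equiv.Perm (Fin (n + 1)),
      ((Equiv.Perm.sign π : ℤ) : ℝ) • Finsupp.single (σ.comp (affMap π)) (1 : ℝ)

/-- The symmetrisation map `sym_n : C_n(X;ℝ) → C_n(X;ℝ)`. -/
def symCh (n : ℕ) : Chain n X →ₗ[ℝ] Chain n X :=
  Finsupp.lsum ℝ fun σ => LinearMap.toSpanSingleton ℝ _ (symSimplex σ)

/-- The ℓ¹-norm of a singular chain. -/
def l1 {n : ℕ} (c : Chain n X) : ℝ := ∑ σ ∈ c.support, |c σ|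

/-- Cycles. -/
def cyc (X : Type) [TopologicalSpace X] : (n : ℕ) → Submodule ℝ (Chain n X)
  | 0 => ⊤
  | n + 1 => LinearMap.ker (bdry n)

/-- Boundaries. -/
def bdries (X : Type) [TopologicalSpace X] (n : ℕ) : Submodule ℝ (Chain n X) :=
  LinearMap.range (bdry n)

/-- A chain is normalised if all but the last face map vanish on it. -/
def IsNormalised : {n : ℕ} → Chain n X → Prop
  | 0, _ => True
  | n + 1, c => ∀ j : Fin (n + 2), j ≠ Fin.last (n + 1) → face j c = 0

/-- The cyclic permutation `τⱼ = (j j-1 ⋯ 1 0)`. -/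
def tau (n : ℕ) (j : Fin (n + 1)) : Equiv.Perm (Fin (n + 1)) := (Fin.cycleRange j)⁻¹

end SingularChains

/-! Precomposing with the `j`-th facet map is precomposing with the `0`-th one after the cyclic
permutation `(Fin.cycleRange j)⁻¹`, whose sign is `(-1)ʲ`; reindexing the signed sum over
permutations in `sym` by right multiplication with it turns `∂ⱼ ∘ sym` into `(-1)ʲ (∂₀ ∘ sym)`. -/

theorem affMap_comp {k m n : ℕ} (g : Fin (m + 1) → Fin (n + 1))
    (f : Fin (k + 1) → Fin (m + 1)) :
    (affMap g).comp (affMap f) = affMap (g ∘ f) := by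
  ext x i
  show ∑ l ∈ univ.filter (fun l => g l = i),
      ∑ m' ∈ univ.filter (fun m' => f m' = l), (x : Fin (k + 1) → ℝ) m' = _
  rw [sum_fiberwise_eq_sum_filter]
  show _ = ∑ m' ∈ univ.filter (fun m' => g (f m') = i), (x : Fin (k + 1) → ℝ) m'
  exact sum_congr (by ext; simp) fun _ _ => rfl

theorem comp_succAbove_eq_comp_succ {n : ℕ} (π : Equiv.Perm (Fin (n + 2))) (j : Fin (n + 2)) :
    ⇑π ∘ j.succAbove = ⇑(π * j.cycleRange⁻¹) ∘ Fin.succ := by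
  funext i
  rw [Function.comp_apply, Function.comp_apply, Equiv.Perm.mul_apply,
    ← Fin.cycleRange_succAbove j i, Equiv.Perm.inv_def, Equiv.symm_apply_apply]

theorem sign_mul_cycleRange_inv {n : ℕ} (π : Equiv.Perm (Fin n)) (j : Fin n) :
    ((Equiv.Perm.sign (π * j.cycleRange⁻¹) : ℤ) : ℝ) =
      (-1) ^ (j : ℕ) * ((Equiv.Perm.sign π : ℤ) : ℝ) := by
  rw [map_mul, map_inv, Fin.sign_cycleRange, Int.units_inv_eq_self]
  push_cast
  ring

section Symmetrisation

variable {X : Type} [TopologicalSpace X]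

theorem face_single {n : ℕ} (j : Fin (n + 2)) (σ : Sing (n + 1) X) (r : ℝ) :
    face j (Finsupp.single σ r) = Finsupp.single (σ.comp (affMap j.succAbove)) r :=
  Finsupp.mapDomain_single

theorem symCh_single {n : ℕ} (σ : Sing n X) (r : ℝ) :
    symCh n (Finsupp.single σ r) = r • symSimplex σ := by
  simp [symCh]

theorem face_symSimplex_eq_sum {n : ℕ} (j : Fin (n + 2)) (σ : Sing (n + 1) X) :
    face j (symSimplex σ) = (((n + 2).factorial : ℝ))⁻¹ •
      ∑ π : Equiv.Perm (Fin (n + 2)), ((Equiv.Perm.sign π : ℤ) : ℝ) •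
        Finsupp.single (σ.comp (affMap (π ∘ j.succAbove))) (1 : ℝ) := by
  simp only [symSimplex, map_smul, map_sum, face_single, ContinuousMap.comp_assoc, affMap_comp]

theorem face_symSimplex {n : ℕ} (j : Fin (n + 2)) (σ : Sing (n + 1) X) :
    face j (symSimplex σ) = ((-1 : ℝ) ^ (j : ℕ)) • face 0 (symSimplex σ) := by
  rw [face_symSimplex_eq_sum, face_symSimplex_eq_sum, smul_comm ((-1 : ℝ) ^ (j : ℕ))]
  congr 1
  rw [smul_sum]
  refine Fintype.sum_equiv (Equiv.mulRight j.cycleRange⁻¹) _ _ (fun π => ?_)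
  rw [Equiv.coe_mulRight, comp_succAbove_eq_comp_succ, Fin.succAbove_zero, smul_smul,
    sign_mul_cycleRange_inv, ← mul_assoc, ← pow_add, ← two_mul, pow_mul, neg_one_sq, one_pow,
    one_mul]

end Symmetrisation

/-- `∂ⱼ ∘ sym = (-1)ʲ · (∂₀ ∘ sym)`. -/
theorem face_comp_symm (X : Type) [TopologicalSpace X] (n : ℕ) (j : Fin (n + 2)) :
    (face j).comp (symCh (n + 1)) =
      ((-1 : ℝ) ^ (j : ℕ)) • ((face (0 : Fin (n + 2))).comp (symCh (n + 1) (X := X))) := by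
  refine Finsupp.lhom_ext fun σ r => ?_
  simp only [LinearMap.comp_apply, LinearMap.smul_apply, symCh_single, map_smul,
    face_symSimplex j σ, smul_comm r ((-1 : ℝ) ^ (j : ℕ))]
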